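/- arXiv:2605.12985 — 9 statements merged into one kernel-verified Lean document; each statement's English description precedes it below -/
import Mathlib

section
/- Let 0 < b < 1/√8 and define φ(x) = x(1-x)·√((x-1/2)² + b²) for x ∈ (0,1). Then φ has exactly three critical points in (0,1): x₀ = 1/2 and x_{1,2} = 1/2 ± √(1/4 - (1+4b²)/6), with both x₁ and x₂ lying in (0,1). -/
/-! With `t = x - 1/2` one has `x (1 - x) = 1/4 - t²` and `1 - 2x = -2t`, so multiplying `φ'(x)` by
`√(t² + b²) > 0` gives the cubic `-3 t (t² - D)` with `D = 1/4 - (1 + 4b²)/6`. Its roots are `t = 0` and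
`t = ±√D`; `b² < 1/8` is exactly `D > 0`, and `D < 1/4` always, so the outer roots lie in `(0, 1)`. -/

open Real

namespace IsoscelesDistProd

variable {b : ℝ}

noncomputable def distProd (b x : ℝ) : ℝ := x * (1 - x) * √((x - 1/2) ^ 2 + b ^ 2)

noncomputable def criticalOffsetSq (b : ℝ) : ℝ := 1/4 - (1 + 4 * b ^ 2) / 6

lemma apexDist_pos (hb : b ≠ 0) (x : ℝ) : 0 < √((x - 1/2) ^ 2 + b ^ 2) :=
  sqrt_pos.mpr (by positivity)

lemma hasDerivAt_distProd (hb : b ≠ 0) (x : ℝ) :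
    HasDerivAt (distProd b)
      ((1 - 2 * x) * √((x - 1/2) ^ 2 + b ^ 2)
        + x * (1 - x) * ((x - 1/2) / √((x - 1/2) ^ 2 + b ^ 2))) x := by
  have hsq : HasDerivAt (fun y ↦ (y - 1/2) ^ 2 + b ^ 2) (2 * (x - 1/2)) x := by
    refine ((((hasDerivAt_id' x).sub_const (1/2)).pow 2).add_const (b ^ 2)).congr_deriv ?_
    push_cast
    ring
  have hsqrt := hsq.sqrt (by positivity)
  have hpoly : HasDerivAt (fun y ↦ y * (1 - y)) (1 - 2 * x) x := by
    refine ((hasDerivAt_id' x).mul ((hasDerivAt_id' x).const_sub 1)).congr_deriv ?_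
    ring
  rw [mul_div_mul_left _ _ two_ne_zero] at hsqrt
  exact hpoly.mul hsqrt

lemma deriv_distProd_mul_apexDist (hb : b ≠ 0) (x : ℝ) :
    deriv (distProd b) x * √((x - 1/2) ^ 2 + b ^ 2)
      = -3 * (x - 1/2) * ((x - 1/2) ^ 2 - criticalOffsetSq b) := by
  rw [(hasDerivAt_distProd hb x).deriv, add_mul, mul_assoc (x * (1 - x)),
    div_mul_cancel₀ _ (apexDist_pos hb x).ne', criticalOffsetSq]
  linear_combination (1 - 2 * x) * sq_sqrt (by positivity : 0 ≤ (x - 1/2) ^ 2 + b ^ 2)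

lemma deriv_distProd_eq_zero_iff (hb : b ≠ 0) (x : ℝ) :
    deriv (distProd b) x = 0 ↔ x = 1/2 ∨ (x - 1/2) ^ 2 = criticalOffsetSq b := by
  rw [← mul_left_inj' (apexDist_pos hb x).ne', zero_mul, deriv_distProd_mul_apexDist hb]
  simp only [mul_eq_zero, sub_eq_zero]
  norm_num

lemma criticalOffsetSq_pos (hb : b ^ 2 < 1 / 8) : 0 < criticalOffsetSq b := by
  unfold criticalOffsetSq
  linarith

lemma criticalOffsetSq_lt (b : ℝ) : criticalOffsetSq b < 1 / 4 := by
  unfold criticalOffsetSq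
  nlinarith [sq_nonneg b]

end IsoscelesDistProd

lemma sub_sq_eq_iff {x c D : ℝ} (hD : 0 ≤ D) :
    (x - c) ^ 2 = D ↔ x = c + √D ∨ x = c - √D := by
  rw [← sq_sqrt hD, sq_eq_sq_iff_eq_or_eq_neg, sq_sqrt hD]
  constructor <;> rintro (h | h) <;> [left; right; left; right] <;> linarith

lemma add_sub_sqrt_mem_Ioo {c D : ℝ} (hDc : D < c ^ 2) (hc : 0 < c) :
    c + √D ∈ Set.Ioo 0 (2 * c) ∧ c - √D ∈ Set.Ioo 0 (2 * c) := by
  have hlt : √D < c := (sqrt_lt' hc).mpr hDc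
  have := sqrt_nonneg D
  exact ⟨⟨by linarith, by linarith⟩, ⟨by linarith, by linarith⟩⟩

open IsoscelesDistProd in
theorem stmt_2 (b : ℝ) (hb0 : 0 < b) (hb1 : b < 1 / Real.sqrt 8)
    (φ : ℝ → ℝ) (hφ : ∀ x, φ x = x * (1 - x) * Real.sqrt ((x - 1/2) ^ 2 + b ^ 2)) :
    {x : ℝ | x ∈ Set.Ioo (0 : ℝ) 1 ∧ deriv φ x = 0} =
      {1/2, 1/2 + Real.sqrt (1/4 - (1 + 4 * b ^ 2) / 6),
        1/2 - Real.sqrt (1/4 - (1 + 4 * b ^ 2) / 6)} ∧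
    (1/2 + Real.sqrt (1/4 - (1 + 4 * b ^ 2) / 6)) ∈ Set.Ioo (0 : ℝ) 1 ∧
    (1/2 - Real.sqrt (1/4 - (1 + 4 * b ^ 2) / 6)) ∈ Set.Ioo (0 : ℝ) 1 := by
  obtain rfl : φ = distProd b := funext hφ
  have hb2 : b ^ 2 < 1 / 8 := by
    have := pow_lt_pow_left₀ hb1 hb0.le two_ne_zero
    rwa [div_pow, one_pow, sq_sqrt (by norm_num)] at this
  have hD0 := criticalOffsetSq_pos hb2
  obtain ⟨hplus, hminus⟩ := add_sub_sqrt_mem_Ioo (c := 1/2) (D := criticalOffsetSq b)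
    (by linarith [criticalOffsetSq_lt b]) (by norm_num)
  norm_num only at hplus hminus
  refine ⟨?_, hplus, hminus⟩
  ext x
  simp only [Set.mem_ofPred_eq, Set.mem_insert_iff, Set.mem_singleton_iff,
    deriv_distProd_eq_zero_iff hb0.ne', sub_sq_eq_iff hD0.le]
  unfold criticalOffsetSq
  constructor
  · exact fun h ↦ h.2
  · rintro (rfl | rfl | rfl)
    exacts [⟨by norm_num, by simp⟩, ⟨hplus, by simp⟩, ⟨hminus, by simp⟩]
end

section
/- Let 0 < b < 1/√8 and φ(x) = x(1-x)·√((x-1/2)² + b²). Then x₀ = 1/2 is a strict local minimum of φ on (0,1). -/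
open Real Filter Topology

theorem stmt_4 (b : ℝ) (hb0 : 0 < b) (hb1 : b < 1 / Real.sqrt 8)
    (φ : ℝ → ℝ) (hφ : ∀ x, φ x = x * (1 - x) * Real.sqrt ((x - 1/2) ^ 2 + b ^ 2)) :
    ∀ᶠ y in 𝓝[≠] (1/2 : ℝ), φ (1/2) < φ y := by
  have h8 : (0:ℝ) < Real.sqrt 8 := Real.sqrt_pos.mpr (by norm_num)
  have hb1' : b * Real.sqrt 8 < 1 := by
    have := (lt_div_iff₀ h8).mp hb1; linarith
  have hb2 : b ^ 2 < 1/8 := by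
    nlinarith [Real.sq_sqrt (show (0:ℝ) ≤ 8 by norm_num), mul_pos hb0 h8]
  set ε : ℝ := 1/8 - b^2 with hεdef
  have hε : 0 < ε := by simp [hεdef]; linarith
  have h1 : ∀ᶠ y in 𝓝 (1/2:ℝ), |y - 1/2| < Real.sqrt ε := by
    filter_upwards [Metric.ball_mem_nhds (1/2:ℝ) (Real.sqrt_pos.mpr hε)] with y hy
    simpa [Real.dist_eq] using hy
  filter_upwards [h1.filter_mono nhdsWithin_le_nhds, self_mem_nhdsWithin] with y hy hne
  rw [hφ, hφ]
  have hs0 : 0 < (y - 1/2)^2 := by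
    have : y - 1/2 ≠ 0 := sub_ne_zero.mpr hne
    positivity
  have hsε : (y - 1/2)^2 < ε := by
    have h2 : |y - 1/2| ^ 2 < Real.sqrt ε ^ 2 := by
      apply pow_lt_pow_left₀ hy (abs_nonneg _)
      norm_num
    rwa [sq_abs, Real.sq_sqrt hε.le] at h2
  set s : ℝ := (y - 1/2)^2 with hsdef
  have hlhs : (1/2 : ℝ) * (1 - 1/2) * Real.sqrt ((1/2 - 1/2)^2 + b^2) = b/4 := by
    rw [show ((1:ℝ)/2 - 1/2)^2 + b^2 = b^2 by ring, Real.sqrt_sq hb0.le]; ring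
  rw [hlhs]
  have hy14 : y * (1 - y) = 1/4 - s := by rw [hsdef]; ring
  rw [hy14]
  have hsb : (0:ℝ) ≤ s + b^2 := by positivity
  have hrhs_nonneg : 0 ≤ (1/4 - s) * Real.sqrt (s + b^2) := by
    apply mul_nonneg _ (Real.sqrt_nonneg _)
    have : s < 1/8 := by simp [hεdef] at hsε; nlinarith
    linarith
  have hsq : (b/4)^2 < ((1/4 - s) * Real.sqrt (s + b^2))^2 := by
    rw [mul_pow, Real.sq_sqrt hsb]
    have hsε' : s < 1/8 - b^2 := by rw [← hεdef]; exact hsε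
    nlinarith [mul_pos hs0 (show (0:ℝ) < 1/8 - b^2 - s by linarith),
      mul_nonneg (mul_nonneg hs0.le hs0.le) hsb]
  calc b/4 < (1/4 - s) * Real.sqrt (s + b^2) :=
        lt_of_pow_lt_pow_left₀ 2 hrhs_nonneg hsq
    _ = _ := by rw [hsdef]
end

section
/- For every a ∈ (0,1), the cubic g(x) = x³ - ((5a+1)/3)x² + (7a/3)x - 2a/3 has exactly one root in the open interval (0,1). -/
theorem stmt_6 (a : ℝ) (ha : a ∈ Set.Ioo (0 : ℝ) 1) :
    ∃! x : ℝ, x ∈ Set.Ioo (0 : ℝ) 1 ∧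
      x ^ 3 - (5 * a + 1) / 3 * x ^ 2 + 7 * a / 3 * x - 2 * a / 3 = 0 := by
  obtain ⟨ha0, ha1⟩ := ha
  -- any root in (0,1) lies in (1/3, 2/5)
  have key : ∀ x : ℝ, x ∈ Set.Ioo (0 : ℝ) 1 →
      x ^ 3 - (5 * a + 1) / 3 * x ^ 2 + 7 * a / 3 * x - 2 * a / 3 = 0 →
      a * (5 * x ^ 2 - 7 * x + 2) = 3 * x ^ 3 - x ^ 2 ∧ 1/3 < x ∧ x < 2/5 := by
    intro x ⟨hx0, hx1⟩ hx
    have heq : a * (5 * x ^ 2 - 7 * x + 2) = 3 * x ^ 3 - x ^ 2 := by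
      linear_combination -3 * hx
    refine ⟨heq, ?_, ?_⟩
    · by_contra h
      push_neg at h
      have hD : (0:ℝ) < 5 * x ^ 2 - 7 * x + 2 := by nlinarith
      have : 0 < a * (5 * x ^ 2 - 7 * x + 2) := mul_pos ha0 hD
      nlinarith [sq_nonneg x]
    · by_contra h
      push_neg at h
      have hD : 5 * x ^ 2 - 7 * x + 2 ≤ 0 := by nlinarith
      have h1 : a * (5 * x ^ 2 - 7 * x + 2) ≤ 0 :=
        mul_nonpos_of_nonneg_of_nonpos ha0.le hD
      nlinarith [sq_nonneg x, mul_pos hx0 hx0]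
  -- existence via IVT
  set f : ℝ → ℝ := fun x => x ^ 3 - (5 * a + 1) / 3 * x ^ 2 + 7 * a / 3 * x - 2 * a / 3 with hf
  have hcont : ContinuousOn f (Set.Icc (0:ℝ) 1) := by fun_prop
  have hiv := intermediate_value_Ioo (by norm_num : (0:ℝ) ≤ 1) hcont
  have h0 : (0:ℝ) ∈ Set.Ioo (f 0) (f 1) := by
    constructor <;> simp [hf] <;> nlinarith
  obtain ⟨x, hxmem, hxval⟩ := hiv h0
  refine ⟨x, ⟨hxmem, hxval⟩, ?_⟩
  rintro y ⟨hy, hyval⟩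
  obtain ⟨heqy, hy1, hy2⟩ := key y hy hyval
  obtain ⟨heqx, hx1, hx2⟩ := key x hxmem hxval
  have hfac : (y - x) * (15*y^2*x^2 - 21*y^2*x - 21*y*x^2 + 6*y^2 + 6*x^2
      + 13*y*x - 2*y - 2*x) = 0 := by
    linear_combination (5*y^2-7*y+2) * heqx - (5*x^2-7*x+2) * heqy
  have hR : 0 < 15*y^2*x^2 - 21*y^2*x - 21*y*x^2 + 6*y^2 + 6*x^2
      + 13*y*x - 2*y - 2*x := by
    nlinarith [mul_pos (by linarith : (0:ℝ) < y - 1/3) (by linarith : (0:ℝ) < x - 1/3),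
      mul_pos (by linarith : (0:ℝ) < 2/5 - y) (by linarith : (0:ℝ) < 2/5 - x),
      mul_pos (by linarith : (0:ℝ) < y - 1/3) (by linarith : (0:ℝ) < 2/5 - x),
      mul_pos (by linarith : (0:ℝ) < 2/5 - y) (by linarith : (0:ℝ) < x - 1/3),
      sq_nonneg (x - y), sq_nonneg (x + y - 2/3)]
  have := mul_eq_zero.mp hfac
  rcases this with h | h
  · linarith
  · linarith
end

section
/- Let a ∈ (0,1) satisfy 25a² - 53a + 1 > 0, and let x₁ = (1/9)(5a + 1 - √(25a² - 53a + 1)). Then g(x₁) = (-250a³ + 795a² - 327a - 2 + (50a² - 106a + 2)√(25a² - 53a + 1))/729, and this value is strictly negative. -/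
open Real

theorem stmt_8 (a : ℝ) (ha : a ∈ Set.Ioo (0 : ℝ) 1) (hd : 25 * a ^ 2 - 53 * a + 1 > 0)
    (g : ℝ → ℝ) (hg : ∀ x, g x = x ^ 3 - (5 * a + 1) / 3 * x ^ 2 + 7 * a / 3 * x - 2 * a / 3)
    (x₁ : ℝ) (hx₁ : x₁ = (1/9) * (5 * a + 1 - Real.sqrt (25 * a ^ 2 - 53 * a + 1))) :
    g x₁ = (-250 * a ^ 3 + 795 * a ^ 2 - 327 * a - 2 +
      (50 * a ^ 2 - 106 * a + 2) * Real.sqrt (25 * a ^ 2 - 53 * a + 1)) / 729 ∧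
    g x₁ < 0 := by
  obtain ⟨ha0, ha1⟩ := ha
  set s := Real.sqrt (25 * a ^ 2 - 53 * a + 1) with hs
  have hs2 : s ^ 2 = 25 * a ^ 2 - 53 * a + 1 := Real.sq_sqrt hd.le
  have hs0 : 0 ≤ s := Real.sqrt_nonneg _
  have hslt : s < 1 := by
    nlinarith [hs2, hs0, sq_nonneg (s - 1)]
  have heq : g x₁ = (-250 * a ^ 3 + 795 * a ^ 2 - 327 * a - 2 +
      (50 * a ^ 2 - 106 * a + 2) * s) / 729 := by
    rw [hg, hx₁]
    linear_combination (-s / 729) * hs2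
  refine ⟨heq, ?_⟩
  rw [heq]
  have ha28 : 28 * a < 1 := by nlinarith
  nlinarith [mul_pos hd hd, sq_nonneg s, sq_nonneg (s - 1), mul_pos ha0 ha0]
end

section
/- Let a, b be real numbers with b > 0 and a < 0, and for x ∈ (0,1) define φ(x) = ln x + ln(1-x) + (1/2)·ln((x-a)² + b²). Then φ''(x) < 0 for all x ∈ (0,1). -/
/-!
On `(0, 1)` we have `φ'' = -1/x² - 1/(1-x)² + (b² - u²)/(u² + b²)²` with `u = x - a`. The last
term is at most `1/(u² + b²)`, and since `a < 0` gives `u > x > 0`, this is at most `1/x²`,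
leaving `φ'' ≤ -1/(1-x)² < 0`.
-/

open Real

section

variable {a b x : ℝ}

lemma hasDerivAt_log_add_log_one_sub (h₀ : x ≠ 0) (h₁ : 1 - x ≠ 0) :
    HasDerivAt (fun y ↦ log y + log (1 - y)) (x⁻¹ - (1 - x)⁻¹) x := by
  refine ((hasDerivAt_log h₀).add (((hasDerivAt_id x).const_sub 1).log h₁)).congr_deriv ?_
  simp only [id]
  ring

lemma hasDerivAt_inv_sub_inv_one_sub (h₀ : x ≠ 0) (h₁ : 1 - x ≠ 0) :
    HasDerivAt (fun y ↦ y⁻¹ - (1 - y)⁻¹) (-(x ^ 2)⁻¹ - ((1 - x) ^ 2)⁻¹) x := by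
  refine ((hasDerivAt_inv h₀).sub (((hasDerivAt_id x).const_sub 1).inv h₁)).congr_deriv ?_
  simp only [id]
  ring

lemma hasDerivAt_sub_sq_add_sq :
    HasDerivAt (fun y ↦ (y - a) ^ 2 + b ^ 2) (2 * (x - a)) x := by
  simpa [mul_comm] using (((hasDerivAt_id x).sub_const a).pow 2).add_const (b ^ 2)

lemma hasDerivAt_half_log_sub_sq_add_sq (h : (x - a) ^ 2 + b ^ 2 ≠ 0) :
    HasDerivAt (fun y ↦ (1 / 2) * log ((y - a) ^ 2 + b ^ 2))
      ((x - a) / ((x - a) ^ 2 + b ^ 2)) x := by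
  refine ((hasDerivAt_sub_sq_add_sq.log h).const_mul (1 / 2)).congr_deriv ?_
  ring

lemma hasDerivAt_sub_div_sub_sq_add_sq (h : (x - a) ^ 2 + b ^ 2 ≠ 0) :
    HasDerivAt (fun y ↦ (y - a) / ((y - a) ^ 2 + b ^ 2))
      ((b ^ 2 - (x - a) ^ 2) / ((x - a) ^ 2 + b ^ 2) ^ 2) x := by
  refine (((hasDerivAt_id x).sub_const a).div hasDerivAt_sub_sq_add_sq h).congr_deriv ?_
  simp only [id]
  field_simp
  ring

lemma sq_sub_sq_div_sq_add_sq_sq_le_inv_sq (hx : 0 < x) (hxu : x ^ 2 ≤ a ^ 2 + b ^ 2) :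
    (b ^ 2 - a ^ 2) / (a ^ 2 + b ^ 2) ^ 2 ≤ (x ^ 2)⁻¹ := by
  have hq : 0 < a ^ 2 + b ^ 2 := by nlinarith [sq_nonneg b]
  calc (b ^ 2 - a ^ 2) / (a ^ 2 + b ^ 2) ^ 2
      ≤ (a ^ 2 + b ^ 2) / (a ^ 2 + b ^ 2) ^ 2 := by gcongr; nlinarith [sq_nonneg a]
    _ = (a ^ 2 + b ^ 2)⁻¹ := by field_simp
    _ ≤ (x ^ 2)⁻¹ := by gcongr

end

theorem stmt_9_general (a b : ℝ) (ha : a < 0)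
    (φ : ℝ → ℝ)
    (hφ : ∀ x, φ x = Real.log x + Real.log (1 - x) + (1/2) * Real.log ((x - a) ^ 2 + b ^ 2)) :
    ∀ x ∈ Set.Ioo (0 : ℝ) 1, deriv (deriv φ) x < 0 := by
  have hq : ∀ y, 0 < y → 0 < (y - a) ^ 2 + b ^ 2 := fun y hy ↦ by
    have : 0 < y - a := by linarith
    positivity
  have hφ' : ∀ y ∈ Set.Ioo (0 : ℝ) 1,
      HasDerivAt φ (y⁻¹ - (1 - y)⁻¹ + (y - a) / ((y - a) ^ 2 + b ^ 2)) y := fun y ⟨h₀, h₁⟩ ↦ by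
    rw [funext hφ]
    exact (hasDerivAt_log_add_log_one_sub h₀.ne' (by linarith)).add
      (hasDerivAt_half_log_sub_sq_add_sq (hq y h₀).ne')
  rintro x ⟨h₀, h₁⟩
  have hderiv : deriv φ =ᶠ[nhds x] fun y ↦ y⁻¹ - (1 - y)⁻¹ + (y - a) / ((y - a) ^ 2 + b ^ 2) := by
    filter_upwards [isOpen_Ioo.mem_nhds ⟨h₀, h₁⟩] with y hy using (hφ' y hy).deriv
  have hφ'' : HasDerivAt (fun y ↦ y⁻¹ - (1 - y)⁻¹ + (y - a) / ((y - a) ^ 2 + b ^ 2))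
      (-(x ^ 2)⁻¹ - ((1 - x) ^ 2)⁻¹ + (b ^ 2 - (x - a) ^ 2) / ((x - a) ^ 2 + b ^ 2) ^ 2) x :=
    (hasDerivAt_inv_sub_inv_one_sub h₀.ne' (by linarith)).add
      (hasDerivAt_sub_div_sub_sq_add_sq (hq x h₀).ne')
  rw [hderiv.deriv_eq, hφ''.deriv]
  have hx_le : x ^ 2 ≤ (x - a) ^ 2 + b ^ 2 := by nlinarith [sq_nonneg b]
  have h_le := sq_sub_sq_div_sq_add_sq_sq_le_inv_sq h₀ hx_le
  have h_pos : 0 < ((1 - x) ^ 2)⁻¹ := by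
    have : 0 < 1 - x := by linarith
    positivity
  linarith

theorem stmt_9 (a b : ℝ) (hb : 0 < b) (ha : a < 0)
    (φ : ℝ → ℝ)
    (hφ : ∀ x, φ x = Real.log x + Real.log (1 - x) + (1/2) * Real.log ((x - a) ^ 2 + b ^ 2)) :
    ∀ x ∈ Set.Ioo (0 : ℝ) 1, deriv (deriv φ) x < 0 :=
  stmt_9_general a b ha φ hφ
end

section
/- Let a, b be real numbers with b > 0 and either a < 0 or a > 1. Then the function φ(x) = x(1-x)·√((x-a)² + b²) has exactly one critical point in (0,1), and it is a maximum. -/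
open Real

lemma phi_hasDeriv (a b : ℝ) (hb : 0 < b) (x : ℝ) :
    HasDerivAt (fun x => x * (1 - x) * Real.sqrt ((x - a) ^ 2 + b ^ 2))
      (((1-2*x)*((x-a)^2+b^2) + x*(1-x)*(x-a)) / Real.sqrt ((x-a)^2+b^2)) x := by
  have hg : 0 < (x - a) ^ 2 + b ^ 2 := by positivity
  have hs : 0 < Real.sqrt ((x-a)^2+b^2) := Real.sqrt_pos.2 hg
  have h1 : HasDerivAt (fun x : ℝ => (x - a) ^ 2 + b ^ 2) (2*(x-a)) x := by
    have := (((hasDerivAt_id x).sub_const a).pow 2).add_const (b^2)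
    simpa using this
  have h2 := (Real.hasDerivAt_sqrt hg.ne').comp x h1
  have h3 : HasDerivAt (fun x : ℝ => x * (1 - x)) (1 - 2*x) x := by
    have := (hasDerivAt_id x).mul ((hasDerivAt_const x 1).sub (hasDerivAt_id x))
    convert this using 1
    rfl
    rfl
    rfl
    simp; ring
  have h4 := h3.mul h2
  convert h4 using 1
  rfl
  rfl
  rfl
  rw [div_eq_iff hs.ne']
  set s := Real.sqrt ((x-a)^2+b^2) with hsdef
  have hs2 : s ^ 2 = (x-a)^2+b^2 := Real.sq_sqrt hg.le
  simp only [Function.comp_apply]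
  rw [← hsdef]
  field_simp
  linear_combination (2*x-1) * hs2

-- key cubic
lemma crit_iff (a b : ℝ) (hb : 0 < b) (φ : ℝ → ℝ)
    (hφ : φ = fun x => x * (1 - x) * Real.sqrt ((x - a) ^ 2 + b ^ 2)) (x : ℝ) :
    deriv φ x = 0 ↔ (1-2*x)*((x-a)^2+b^2) + x*(1-x)*(x-a) = 0 := by
  have hg : 0 < (x - a) ^ 2 + b ^ 2 := by positivity
  have hs : 0 < Real.sqrt ((x-a)^2+b^2) := Real.sqrt_pos.2 hg
  rw [hφ, (phi_hasDeriv a b hb x).deriv, div_eq_zero_iff]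
  constructor
  · rintro (h | h)
    · exact h
    · exact absurd h hs.ne'
  · exact fun h => Or.inl h

lemma uniq (a b : ℝ) (hb : 0 < b) (ha : a < 0 ∨ 1 < a) {y c : ℝ}
    (hy : y ∈ Set.Ioo (0:ℝ) 1) (hc : c ∈ Set.Ioo (0:ℝ) 1)
    (Hy : (1-2*y)*((y-a)^2+b^2) + y*(1-y)*(y-a) = 0)
    (Hc : (1-2*c)*((c-a)^2+b^2) + c*(1-c)*(c-a) = 0) : y = c := by
  obtain ⟨hy0, hy1⟩ := hy
  obtain ⟨hc0, hc1⟩ := hc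
  have key : (y - c) * (-3*(y^2+y*c+c^2) + (2+5*a)*(y+c) - (3*a+2*a^2+2*b^2)) = 0 := by
    linear_combination Hy - Hc
  rcases ha with ha | ha
  · -- a < 0 : critical points in (1/2, 1)
    have hy2 : 1/2 < y := by
      nlinarith [mul_pos (mul_pos hy0 (by linarith : (0:ℝ) < 1 - y)) (by linarith : (0:ℝ) < y - a),
        sq_nonneg (y - a), sq_nonneg b, mul_pos hb hb]
    have hc2 : 1/2 < c := by
      nlinarith [mul_pos (mul_pos hc0 (by linarith : (0:ℝ) < 1 - c)) (by linarith : (0:ℝ) < c - a),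
        sq_nonneg (c - a), sq_nonneg b, mul_pos hb hb]
    have hK : -3*(y^2+y*c+c^2) + (2+5*a)*(y+c) - (3*a+2*a^2+2*b^2) < 0 := by
      nlinarith [mul_pos (by linarith : (0:ℝ) < -a) (by linarith : (0:ℝ) < 5*(y+c) - 3),
        mul_nonneg (by linarith : (0:ℝ) ≤ y - 1/2) (by linarith : (0:ℝ) ≤ c - 1/2),
        sq_nonneg (y - 1/2), sq_nonneg (c - 1/2), sq_nonneg a, mul_pos hb hb]
    have := mul_eq_zero.1 key
    rcases this with h | h
    · linarith
    · linarith
  · -- 1 < a : critical points in (0, 1/2)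
    have hy2 : y < 1/2 := by
      nlinarith [mul_pos (mul_pos hy0 (by linarith : (0:ℝ) < 1 - y)) (by linarith : (0:ℝ) < a - y),
        sq_nonneg (y - a), sq_nonneg b, mul_pos hb hb]
    have hc2 : c < 1/2 := by
      nlinarith [mul_pos (mul_pos hc0 (by linarith : (0:ℝ) < 1 - c)) (by linarith : (0:ℝ) < a - c),
        sq_nonneg (c - a), sq_nonneg b, mul_pos hb hb]
    have hK : -3*(y^2+y*c+c^2) + (2+5*a)*(y+c) - (3*a+2*a^2+2*b^2) < 0 := by
      nlinarith [mul_nonneg (by linarith : (0:ℝ) ≤ a - 1) (by linarith : (0:ℝ) ≤ 5 + 2*a - 5*(y+c)),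
        mul_nonneg (by linarith : (0:ℝ) ≤ 1/2 - y) (by linarith : (0:ℝ) ≤ 1/2 - c),
        sq_nonneg (1/2 - y), sq_nonneg (1/2 - c), mul_pos hb hb]
    have := mul_eq_zero.1 key
    rcases this with h | h
    · linarith
    · linarith

theorem stmt_10 (a b : ℝ) (hb : 0 < b) (ha : a < 0 ∨ 1 < a)
    (φ : ℝ → ℝ) (hφ : ∀ x, φ x = x * (1 - x) * Real.sqrt ((x - a) ^ 2 + b ^ 2)) :
    ∃ c ∈ Set.Ioo (0 : ℝ) 1, deriv φ c = 0 ∧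
      (∀ y ∈ Set.Ioo (0 : ℝ) 1, deriv φ y = 0 → y = c) ∧
      (∀ y ∈ Set.Ioo (0 : ℝ) 1, φ y ≤ φ c) := by
  have hφ' : φ = fun x => x * (1 - x) * Real.sqrt ((x - a) ^ 2 + b ^ 2) := funext hφ
  subst hφ'
  set φ : ℝ → ℝ := fun x => x * (1 - x) * Real.sqrt ((x - a) ^ 2 + b ^ 2) with hφdef
  have hcont : Continuous φ := by
    apply Continuous.mul
    · continuity
    · exact (continuous_pow 2 |>.comp (continuous_id.sub continuous_const) |>.add continuous_const).sqrt
  obtain ⟨c, hcmem, hcmax⟩ := (isCompact_Icc (a := (0:ℝ)) (b := 1)).exists_isMaxOn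
    (Set.nonempty_Icc.2 zero_le_one) hcont.continuousOn
  have hhalf : 0 < φ (1/2) := by
    have hg : 0 < (1/2 - a) ^ 2 + b ^ 2 := by positivity
    have := Real.sqrt_pos.2 hg
    simp only [hφdef]
    norm_num
    positivity
  have hφc : 0 < φ c := lt_of_lt_of_le hhalf (hcmax (by norm_num : (1:ℝ)/2 ∈ Set.Icc (0:ℝ) 1))
  have hcIoo : c ∈ Set.Ioo (0:ℝ) 1 := by
    obtain ⟨h0, h1⟩ := hcmem
    have hs : 0 < Real.sqrt ((c - a) ^ 2 + b ^ 2) := Real.sqrt_pos.2 (by positivity)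
    have hcc : 0 < c * (1 - c) := by
      by_contra h
      push_neg at h
      have : φ c ≤ 0 := mul_nonpos_of_nonpos_of_nonneg (by exact h) hs.le
      linarith
    constructor
    · rcases lt_or_eq_of_le h0 with h | h
      · exact h
      · exfalso; rw [← h] at hcc; simp at hcc
    · rcases lt_or_eq_of_le h1 with h | h
      · exact h
      · exfalso; rw [h] at hcc; simp at hcc
  have hlocal : IsLocalMax φ c := hcmax.isLocalMax (Icc_mem_nhds hcIoo.1 hcIoo.2)
  have hderiv : deriv φ c = 0 := hlocal.deriv_eq_zero
  refine ⟨c, hcIoo, hderiv, ?_, ?_⟩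
  · intro y hyIoo hy
    exact uniq a b hb ha hyIoo hcIoo
      ((crit_iff a b hb φ rfl y).1 hy) ((crit_iff a b hb φ rfl c).1 hderiv)
  · intro y hyIoo
    exact hcmax (Set.Ioo_subset_Icc_self hyIoo)
end

section
/- Let a ∈ (0,1) and b > 0 with b² > a(1-a). Then for all x ∈ (0,1), 1/((x-a)² + b²) < 1/x² + 1/(1-x)². -/
theorem stmt_12 (a b : ℝ) (ha : a ∈ Set.Ioo (0 : ℝ) 1) (hb : 0 < b)
    (hab : b ^ 2 > a * (1 - a)) :
    ∀ x ∈ Set.Ioo (0 : ℝ) 1,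
      1 / ((x - a) ^ 2 + b ^ 2) < 1 / x ^ 2 + 1 / (1 - x) ^ 2 := by
  obtain ⟨ha0, ha1⟩ := ha
  intro x ⟨hx0, hx1⟩
  have hx1' : 0 < 1 - x := by linarith
  have hxs : 0 < x ^ 2 := by positivity
  have hxs' : 0 < (1 - x) ^ 2 := by positivity
  rcases le_or_gt x (1/2) with h | h
  · have hD : x ^ 2 < (x - a) ^ 2 + b ^ 2 := by nlinarith [sq_nonneg (x - a)]
    have h1 : 1 / ((x - a) ^ 2 + b ^ 2) < 1 / x ^ 2 :=
      one_div_lt_one_div_of_lt hxs hD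
    have h2 : 0 < 1 / (1 - x) ^ 2 := by positivity
    linarith
  · have hD : (1 - x) ^ 2 < (x - a) ^ 2 + b ^ 2 := by nlinarith [sq_nonneg (x - a)]
    have h1 : 1 / ((x - a) ^ 2 + b ^ 2) < 1 / (1 - x) ^ 2 :=
      one_div_lt_one_div_of_lt hxs' hD
    have h2 : 0 < 1 / x ^ 2 := by positivity
    linarith
end

section
/- Let a ∈ (0,1), b > 0 with b² > a(1-a), and define φ(x) = ln x + ln(1-x) + (1/2)·ln((x-a)² + b²) on (0,1). Then φ'' (x) < 0 for all x ∈ (0,1), and φ has exactly one critical point in (0,1), which is its maximum. -/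
open Real

private lemma stmt15_phi (a b : ℝ) (φ : ℝ → ℝ)
    (hφ : ∀ x, φ x = Real.log x + Real.log (1 - x) + (1/2) * Real.log ((x - a) ^ 2 + b ^ 2))
    (hb : 0 < b) {x : ℝ} (hx0 : x ≠ 0) (hx1 : x ≠ 1) :
    HasDerivAt φ (x⁻¹ - (1-x)⁻¹ + (x-a)/((x-a)^2+b^2)) x := by
  have hφ' : φ = fun x => Real.log x + Real.log (1 - x) + (1/2) * Real.log ((x - a) ^ 2 + b ^ 2) :=
    funext hφ
  rw [hφ']
  have hx1' : (1:ℝ) - x ≠ 0 := sub_ne_zero.mpr (Ne.symm hx1)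
  have hD : (x-a)^2 + b^2 ≠ 0 := by positivity
  have h1 : HasDerivAt (fun y : ℝ => Real.log y) x⁻¹ x := Real.hasDerivAt_log hx0
  have h2 : HasDerivAt (fun y : ℝ => Real.log (1 - y)) (-(1-x)⁻¹) x := by
    have hinner : HasDerivAt (fun y : ℝ => 1 - y) (-1) x := (hasDerivAt_id x).const_sub 1
    have := (Real.hasDerivAt_log hx1').comp x hinner
    exact this.congr_deriv (by ring)
  have hg : HasDerivAt (fun y : ℝ => (y-a)^2 + b^2) (2*(x-a)) x := by
    have := (((hasDerivAt_id x).sub_const a).pow 2).add_const (b^2)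
    simpa using this
  have h3 : HasDerivAt (fun y : ℝ => (1/2) * Real.log ((y-a)^2+b^2)) ((x-a)/((x-a)^2+b^2)) x := by
    have := ((Real.hasDerivAt_log hD).comp x hg).const_mul (1/2)
    refine this.congr_deriv ?_
    field_simp
  exact (h1.add h2).add h3

private lemma stmt15_psi (a b : ℝ) (hb : 0 < b) {x : ℝ} (hx0 : x ≠ 0) (hx1 : x ≠ 1) :
    HasDerivAt (fun x : ℝ => x⁻¹ - (1-x)⁻¹ + (x-a)/((x-a)^2+b^2))
      (-(x^2)⁻¹ - ((1-x)^2)⁻¹ + (b^2-(x-a)^2)/((x-a)^2+b^2)^2) x := by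
  have hx1' : (1:ℝ) - x ≠ 0 := sub_ne_zero.mpr (Ne.symm hx1)
  have hD : (x-a)^2 + b^2 ≠ 0 := by positivity
  have h1 : HasDerivAt (fun y : ℝ => y⁻¹) (-(x^2)⁻¹) x := hasDerivAt_inv hx0
  have h2 : HasDerivAt (fun y : ℝ => (1-y)⁻¹) (((1-x)^2)⁻¹) x := by
    have hinner : HasDerivAt (fun y : ℝ => 1 - y) (-1) x := (hasDerivAt_id x).const_sub 1
    have := (hasDerivAt_inv hx1').comp x hinner
    refine this.congr_deriv ?_
    field_simp
  have hg : HasDerivAt (fun y : ℝ => (y-a)^2 + b^2) (2*(x-a)) x := by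
    have := (((hasDerivAt_id x).sub_const a).pow 2).add_const (b^2)
    simpa using this
  have hnum : HasDerivAt (fun y : ℝ => y - a) 1 x := (hasDerivAt_id x).sub_const a
  have h3 : HasDerivAt (fun y : ℝ => (y-a)/((y-a)^2+b^2))
      ((b^2-(x-a)^2)/((x-a)^2+b^2)^2) x := by
    have := hnum.div hg hD
    refine this.congr_deriv ?_
    field_simp
    ring
  exact (h1.sub h2).add h3

theorem stmt_15 (a b : ℝ) (ha : a ∈ Set.Ioo (0 : ℝ) 1) (hb : 0 < b)
    (hab : b ^ 2 > a * (1 - a))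
    (φ : ℝ → ℝ)
    (hφ : ∀ x, φ x = Real.log x + Real.log (1 - x) + (1/2) * Real.log ((x - a) ^ 2 + b ^ 2)) :
    (∀ x ∈ Set.Ioo (0 : ℝ) 1, deriv (deriv φ) x < 0) ∧
    ∃ c ∈ Set.Ioo (0 : ℝ) 1, deriv φ c = 0 ∧
      (∀ y ∈ Set.Ioo (0 : ℝ) 1, deriv φ y = 0 → y = c) ∧
      (∀ y ∈ Set.Ioo (0 : ℝ) 1, φ y ≤ φ c) := by
  obtain ⟨ha0, ha1⟩ := ha
  set ψ : ℝ → ℝ := fun x : ℝ => x⁻¹ - (1-x)⁻¹ + (x-a)/((x-a)^2+b^2) with hψdef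
  -- derivative of φ on Ioo 0 1
  have hDpos : ∀ x : ℝ, 0 < (x-a)^2 + b^2 := fun x => by positivity
  have hdφ : ∀ x ∈ Set.Ioo (0:ℝ) 1, HasDerivAt φ (ψ x) x := fun x hx =>
    stmt15_phi a b φ hφ hb (ne_of_gt hx.1) (ne_of_lt hx.2)
  have hdφ' : ∀ x ∈ Set.Ioo (0:ℝ) 1, deriv φ x = ψ x := fun x hx => (hdφ x hx).deriv
  have hdψ : ∀ x ∈ Set.Ioo (0:ℝ) 1, HasDerivAt ψ
      (-(x^2)⁻¹ - ((1-x)^2)⁻¹ + (b^2-(x-a)^2)/((x-a)^2+b^2)^2) x := fun x hx =>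
    stmt15_psi a b hb (ne_of_gt hx.1) (ne_of_lt hx.2)
  -- second derivative negative
  have hneg : ∀ x ∈ Set.Ioo (0:ℝ) 1,
      -(x^2)⁻¹ - ((1-x)^2)⁻¹ + (b^2-(x-a)^2)/((x-a)^2+b^2)^2 < 0 := by
    intro x hx
    obtain ⟨hx0, hx1⟩ := hx
    have hD := hDpos x
    have h1 : (b^2-(x-a)^2)/((x-a)^2+b^2)^2 ≤ 1/((x-a)^2+b^2) := by
      rw [div_le_div_iff₀ (by positivity) hD]
      nlinarith [sq_nonneg (x-a)]
    have h2 : 1/((x-a)^2+b^2) < (x^2)⁻¹ + ((1-x)^2)⁻¹ := by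
      rcases le_or_gt x (1/2) with h | h
      · have hxx : x^2 < (x-a)^2 + b^2 := by nlinarith [mul_nonneg ha0.le (by linarith : (0:ℝ) ≤ 1 - 2*x)]
        have : 1/((x-a)^2+b^2) < (x^2)⁻¹ := by
          rw [one_div]
          exact inv_strictAnti₀ (pow_pos hx0 2) hxx
        have hpos : (0:ℝ) < ((1-x)^2)⁻¹ := inv_pos.mpr (pow_pos (by linarith) 2)
        linarith
      · have hxx : (1-x)^2 < (x-a)^2 + b^2 := by
          nlinarith [mul_nonneg (by linarith : (0:ℝ) ≤ 1 - a) (by linarith : (0:ℝ) ≤ 2*x - 1)]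
        have : 1/((x-a)^2+b^2) < ((1-x)^2)⁻¹ := by
          rw [one_div]
          exact inv_strictAnti₀ (pow_pos (by linarith : (0:ℝ) < 1 - x) 2) hxx
        have hpos : (0:ℝ) < (x^2)⁻¹ := inv_pos.mpr (pow_pos hx0 2)
        linarith
    linarith
  constructor
  · intro x hx
    have hev : deriv φ =ᶠ[nhds x] ψ := by
      filter_upwards [isOpen_Ioo.mem_nhds hx] with y hy using hdφ' y hy
    rw [hev.deriv_eq, (hdψ x hx).deriv]
    exact hneg x hx
  · -- ψ strictly anti on Ioo 0 1
    have hcψ : ContinuousOn ψ (Set.Ioo (0:ℝ) 1) := fun x hx =>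
      (hdψ x hx).continuousAt.continuousWithinAt
    have hanti : StrictAntiOn ψ (Set.Ioo (0:ℝ) 1) := by
      apply StrictAntiOn.mono ?_ (le_refl _)
      exact strictAntiOn_of_deriv_neg (convex_Ioo 0 1) hcψ (by
        intro x hx
        rw [interior_Ioo] at hx
        rw [(hdψ x hx).deriv]
        exact hneg x hx)
    -- endpoints of sign change
    set x₀ : ℝ := 2*b/(6*b+1) with hx₀def
    have hx₀pos : 0 < x₀ := by positivity
    have hx₀lt : x₀ < 1/3 := by
      rw [div_lt_iff₀ (by linarith)]
      linarith
    have hx₀inv : x₀⁻¹ = 3 + 1/(2*b) := by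
      rw [hx₀def]
      field_simp
      ring
    have hbound : ∀ t : ℝ, -(1/(2*b)) ≤ t/(t^2+b^2) ∧ t/(t^2+b^2) ≤ 1/(2*b) := by
      intro t
      have hD : (0:ℝ) < t^2 + b^2 := by positivity
      constructor
      · rw [neg_le, ← neg_div, div_le_div_iff₀ hD (by positivity)]
        nlinarith [sq_nonneg (t+b)]
      · rw [div_le_div_iff₀ hD (by positivity)]
        nlinarith [sq_nonneg (t-b)]
    have hψ0 : 0 < ψ x₀ := by
      have h1 : (1-x₀)⁻¹ < 2 := by
        rw [inv_lt_comm₀ (by linarith) (by norm_num)]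
        linarith
      have h2 := (hbound (x₀ - a)).1
      have : ψ x₀ = x₀⁻¹ - (1-x₀)⁻¹ + (x₀-a)/((x₀-a)^2+b^2) := rfl
      rw [this, hx₀inv]
      linarith
    have hψ1 : ψ (1 - x₀) < 0 := by
      have h1 : (1-(1-x₀))⁻¹ = x₀⁻¹ := by ring_nf
      have h2 := (hbound ((1-x₀) - a)).2
      have h3 : (1-x₀)⁻¹ < 2 := by
        rw [inv_lt_comm₀ (by linarith) (by norm_num)]
        linarith
      have : ψ (1-x₀) = (1-x₀)⁻¹ - (1-(1-x₀))⁻¹ + ((1-x₀)-a)/(((1-x₀)-a)^2+b^2) := rfl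
      rw [this, h1, hx₀inv]
      linarith
    have hsub : Set.Icc x₀ (1-x₀) ⊆ Set.Ioo (0:ℝ) 1 := by
      intro y hy
      exact ⟨lt_of_lt_of_le hx₀pos hy.1, by
        have := hy.2; linarith⟩
    have hccψ : ContinuousOn ψ (Set.Icc x₀ (1-x₀)) := hcψ.mono hsub
    have hivt := intermediate_value_Ioo' (by linarith : x₀ ≤ 1 - x₀) hccψ
    have h0mem : (0:ℝ) ∈ Set.Ioo (ψ (1-x₀)) (ψ x₀) := ⟨hψ1, hψ0⟩
    obtain ⟨c, hcmem, hc0⟩ := hivt h0mem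
    have hcIoo : c ∈ Set.Ioo (0:ℝ) 1 := hsub ⟨hcmem.1.le, hcmem.2.le⟩
    refine ⟨c, hcIoo, by rw [hdφ' c hcIoo, hc0], ?_, ?_⟩
    · intro y hy hdy
      rw [hdφ' y hy] at hdy
      by_contra hne
      rcases lt_or_gt_of_ne hne with h | h
      · have := hanti hy hcIoo h
        rw [hdy, hc0] at this
        exact lt_irrefl _ this
      · have := hanti hcIoo hy h
        rw [hdy, hc0] at this
        exact lt_irrefl _ this
    · intro y hy
      rcases lt_trichotomy y c with h | h | h
      · -- φ strictly mono on Icc y c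
        have hsub2 : Set.Icc y c ⊆ Set.Ioo (0:ℝ) 1 := fun z hz =>
          ⟨lt_of_lt_of_le hy.1 hz.1, lt_of_le_of_lt hz.2 hcIoo.2⟩
        have hmono : StrictMonoOn φ (Set.Icc y c) := by
          apply strictMonoOn_of_deriv_pos (convex_Icc y c)
          · exact fun z hz => (hdφ z (hsub2 hz)).continuousAt.continuousWithinAt
          · intro z hz
            rw [interior_Icc] at hz
            have hzIoo : z ∈ Set.Ioo (0:ℝ) 1 := hsub2 ⟨hz.1.le, hz.2.le⟩
            rw [hdφ' z hzIoo]
            have := hanti hzIoo hcIoo hz.2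
            rw [hc0] at this
            exact this
        exact (hmono (Set.left_mem_Icc.mpr h.le) (Set.right_mem_Icc.mpr h.le) h).le
      · rw [h]
      · have hsub2 : Set.Icc c y ⊆ Set.Ioo (0:ℝ) 1 := fun z hz =>
          ⟨lt_of_lt_of_le hcIoo.1 hz.1, lt_of_le_of_lt hz.2 hy.2⟩
        have hmono : StrictAntiOn φ (Set.Icc c y) := by
          apply strictAntiOn_of_deriv_neg (convex_Icc c y)
          · exact fun z hz => (hdφ z (hsub2 hz)).continuousAt.continuousWithinAt
          · intro z hz
            rw [interior_Icc] at hz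
            have hzIoo : z ∈ Set.Ioo (0:ℝ) 1 := hsub2 ⟨hz.1.le, hz.2.le⟩
            rw [hdφ' z hzIoo]
            have := hanti hcIoo hzIoo hz.1
            rw [hc0] at this
            exact this
        exact (hmono (Set.left_mem_Icc.mpr h.le) (Set.right_mem_Icc.mpr h.le) h).le
end

section
/- For an equilateral triangle with side length l, the maximum over points p in the (closed) triangle of the product of the distances from p to the three vertices equals (√3/8)·l³, and it is attained at the midpoint of each side. -/
/-!
Write `p = a • A + b • B + c • C` in barycentric coordinates. Then
`|pA|² = l² (b² + bc + c²)` and cyclically, so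
`φ(p)² = l⁶ (a² + ab + b²)(b² + bc + c²)(c² + ca + a²)`.
With `a + b + c = 1`, `q = ab + bc + ca` and `r = abc` this product is `q² - q³ - r`.
It is at most `3/64`: for `q ≤ 1/4` because `q²(1 - q)` is increasing there, and for `q ≥ 1/4`
by Schur's inequality `9r ≥ 4q - 1`. The bound is attained at `(1/2, 1/2, 0)`, a midpoint.
-/

open Real

theorem schur_ineq_of_le {a b c : ℝ} (hc : 0 ≤ c) (hcb : c ≤ b) (hba : b ≤ a) :
    4 * (a + b + c) * (a * b + b * c + c * a) ≤ (a + b + c) ^ 3 + 9 * (a * b * c) := by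
  have key : (a + b + c) ^ 3 + 9 * (a * b * c) - 4 * (a + b + c) * (a * b + b * c + c * a)
      = (a - b) ^ 2 * (a + b - c) + c * (a - c) * (b - c) := by ring
  have h₁ : 0 ≤ (a - b) ^ 2 * (a + b - c) := mul_nonneg (sq_nonneg _) (by linarith)
  have h₂ : 0 ≤ c * (a - c) * (b - c) := mul_nonneg (mul_nonneg hc (by linarith)) (by linarith)
  linarith

theorem schur_ineq {a b c : ℝ} (ha : 0 ≤ a) (hb : 0 ≤ b) (hc : 0 ≤ c) :
    4 * (a + b + c) * (a * b + b * c + c * a) ≤ (a + b + c) ^ 3 + 9 * (a * b * c) := by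
  rcases le_total a b with hab | hab <;> rcases le_total b c with hbc | hbc <;>
    rcases le_total a c with hac | hac <;>
    first
    | linarith [schur_ineq_of_le hc ‹c ≤ b› ‹b ≤ a›]
    | linarith [schur_ineq_of_le hb ‹b ≤ c› ‹c ≤ a›]
    | linarith [schur_ineq_of_le hc ‹c ≤ a› ‹a ≤ b›]
    | linarith [schur_ineq_of_le ha ‹a ≤ c› ‹c ≤ b›]
    | linarith [schur_ineq_of_le hb ‹b ≤ a› ‹a ≤ c›]
    | linarith [schur_ineq_of_le ha ‹a ≤ b› ‹b ≤ c›]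

theorem prod_sq_add_mul_add_sq_le {a b c : ℝ} (ha : 0 ≤ a) (hb : 0 ≤ b) (hc : 0 ≤ c)
    (habc : a + b + c = 1) :
    (a ^ 2 + a * b + b ^ 2) * (b ^ 2 + b * c + c ^ 2) * (c ^ 2 + c * a + a ^ 2) ≤ 3 / 64 := by
  set q := a * b + b * c + c * a
  set r := a * b * c
  have hpqr : (a ^ 2 + a * b + b ^ 2) * (b ^ 2 + b * c + c ^ 2) * (c ^ 2 + c * a + a ^ 2)
      = q ^ 2 * (a + b + c) ^ 2 - q ^ 3 - r * (a + b + c) ^ 3 := by ring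
  have hq₀ : 0 ≤ q := by positivity
  have hr₀ : 0 ≤ r := by positivity
  have hq : q ≤ 1 / 3 := by
    have : 3 * q ≤ (a + b + c) ^ 2 := by
      nlinarith [sq_nonneg (a - b), sq_nonneg (b - c), sq_nonneg (c - a)]
    rw [habc] at this; linarith
  have hqr : 4 * q ≤ 1 + 9 * r := by simpa [habc] using schur_ineq ha hb hc
  rw [hpqr, habc]
  rcases le_total q (1 / 4) with h | h
  · nlinarith [mul_nonneg (mul_nonneg hq₀ hq₀) (sub_nonneg.2 h), sq_nonneg (q - 1 / 4)]
  · nlinarith [sq_nonneg (q - 1 / 4), mul_nonneg (sub_nonneg.2 h) (sub_nonneg.2 hq)]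

section Equilateral

variable {E : Type*} [NormedAddCommGroup E] [InnerProductSpace ℝ E]

theorem norm_smul_add_smul_sq_of_equilateral {u v : E} {l : ℝ} (hu : ‖u‖ = l)
    (hv : ‖v‖ = l) (huv : ‖u - v‖ = l) (s t : ℝ) :
    ‖s • u + t • v‖ ^ 2 = l ^ 2 * (s ^ 2 + s * t + t ^ 2) := by
  have hinner : inner ℝ u v = l ^ 2 / 2 := by
    have := norm_sub_sq_real u v
    rw [hu, hv, huv] at this
    linarith
  rw [norm_add_sq_real, norm_smul, norm_smul, real_inner_smul_left, real_inner_smul_right,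
    hinner, hu, hv, mul_pow, mul_pow, Real.norm_eq_abs, Real.norm_eq_abs, sq_abs, sq_abs]
  ring

theorem dist_sq_of_equilateral {A B C p : E} {l a b c : ℝ} (hAB : dist A B = l)
    (hBC : dist B C = l) (hCA : dist C A = l) (habc : a + b + c = 1)
    (hp : p = a • A + b • B + c • C) :
    dist p A ^ 2 = l ^ 2 * (b ^ 2 + b * c + c ^ 2) := by
  have hpA : p - A = b • (B - A) + c • (C - A) := by
    rw [hp, show a = 1 - b - c by linarith]; module
  rw [dist_eq_norm, hpA]
  refine norm_smul_add_smul_sq_of_equilateral ?_ ?_ ?_ b c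
  · rw [← dist_eq_norm, dist_comm, hAB]
  · rw [← dist_eq_norm, hCA]
  · rw [sub_sub_sub_cancel_right, ← dist_eq_norm, hBC]

theorem dist_mul_dist_mul_dist_sq_of_equilateral {A B C p : E} {l a b c : ℝ}
    (hAB : dist A B = l) (hBC : dist B C = l) (hCA : dist C A = l) (habc : a + b + c = 1)
    (hp : p = a • A + b • B + c • C) :
    (dist p A * dist p B * dist p C) ^ 2 = l ^ 6 *
      ((a ^ 2 + a * b + b ^ 2) * (b ^ 2 + b * c + c ^ 2) * (c ^ 2 + c * a + a ^ 2)) := by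
  have hA := dist_sq_of_equilateral hAB hBC hCA habc hp
  have hB := dist_sq_of_equilateral hBC hCA hAB (p := p) (a := b) (b := c) (c := a)
    (by linarith) (by rw [hp]; abel)
  have hC := dist_sq_of_equilateral hCA hAB hBC (p := p) (a := c) (b := a) (c := b)
    (by linarith) (by rw [hp]; abel)
  rw [mul_pow, mul_pow, hA, hB, hC]
  ring

theorem exists_eq_smul_add_smul_add_smul_of_mem_convexHull {A B C p : E}
    (hp : p ∈ convexHull ℝ {A, B, C}) :
    ∃ a b c : ℝ, 0 ≤ a ∧ 0 ≤ b ∧ 0 ≤ c ∧ a + b + c = 1 ∧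
      p = a • A + b • B + c • C := by
  rw [convexHull_insert (Set.insert_nonempty B {C}), convexHull_pair, mem_convexJoin] at hp
  obtain ⟨_, rfl, q, ⟨b, c, hb, hc, hbc, rfl⟩, s, t, hs, ht, hst, rfl⟩ := hp
  refine ⟨s, t * b, t * c, hs, mul_nonneg ht hb, mul_nonneg ht hc, ?_, ?_⟩
  · rw [add_assoc, ← mul_add, hbc, mul_one, hst]
  · simp only [smul_add, smul_smul, add_assoc]

end Equilateral

theorem stmt_17_general (l : ℝ) (A B C : EuclideanSpace ℝ (Fin 2))
    (hAB : dist A B = l) (hBC : dist B C = l) (hCA : dist C A = l) :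
    IsGreatest ((fun p => dist p A * dist p B * dist p C) ''
        (convexHull ℝ {A, B, C})) (Real.sqrt 3 / 8 * l ^ 3) ∧
    (fun p => dist p A * dist p B * dist p C) (midpoint ℝ A B) = Real.sqrt 3 / 8 * l ^ 3 ∧
    (fun p => dist p A * dist p B * dist p C) (midpoint ℝ B C) = Real.sqrt 3 / 8 * l ^ 3 ∧
    (fun p => dist p A * dist p B * dist p C) (midpoint ℝ C A) = Real.sqrt 3 / 8 * l ^ 3 := by
  have hl : 0 ≤ l := hAB ▸ dist_nonneg
  have hmax : (√3 / 8 * l ^ 3) ^ 2 = l ^ 6 * (3 / 64) := by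
    rw [mul_pow, div_pow, sq_sqrt (by norm_num)]; ring
  have hmax₀ : 0 ≤ √3 / 8 * l ^ 3 := by positivity
  have hattain : ∀ a b c : ℝ, ∀ p, a + b + c = 1 → p = a • A + b • B + c • C →
      (a ^ 2 + a * b + b ^ 2) * (b ^ 2 + b * c + c ^ 2) * (c ^ 2 + c * a + a ^ 2) = 3 / 64 →
      dist p A * dist p B * dist p C = √3 / 8 * l ^ 3 := fun a b c p habc hp hF =>
    (sq_eq_sq₀ (by positivity) hmax₀).1 (by
      rw [dist_mul_dist_mul_dist_sq_of_equilateral hAB hBC hCA habc hp, hF, hmax])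
  have hmAB := hattain 2⁻¹ 2⁻¹ 0 (midpoint ℝ A B) (by norm_num)
    (by rw [midpoint_eq_smul_add, invOf_eq_inv]; module) (by norm_num)
  have hmBC := hattain 0 2⁻¹ 2⁻¹ (midpoint ℝ B C) (by norm_num)
    (by rw [midpoint_eq_smul_add, invOf_eq_inv]; module) (by norm_num)
  have hmCA := hattain 2⁻¹ 0 2⁻¹ (midpoint ℝ C A) (by norm_num)
    (by rw [midpoint_eq_smul_add, invOf_eq_inv]; module) (by norm_num)
  refine ⟨⟨⟨midpoint ℝ A B, ?_, hmAB⟩, ?_⟩, hmAB, hmBC, hmCA⟩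
  · exact (convex_convexHull ℝ _).segment_subset (subset_convexHull ℝ _ (by simp))
      (subset_convexHull ℝ _ (by simp)) (midpoint_mem_segment A B)
  · rintro _ ⟨p, hp, rfl⟩
    obtain ⟨a, b, c, ha, hb, hc, habc, rfl⟩ :=
      exists_eq_smul_add_smul_add_smul_of_mem_convexHull hp
    refine (sq_le_sq₀ (by positivity) hmax₀).1 ?_
    rw [dist_mul_dist_mul_dist_sq_of_equilateral hAB hBC hCA habc rfl, hmax]
    exact mul_le_mul_of_nonneg_left (prod_sq_add_mul_add_sq_le ha hb hc habc) (by positivity)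

theorem stmt_17 (l : ℝ) (hl : 0 < l) (A B C : EuclideanSpace ℝ (Fin 2))
    (hAB : dist A B = l) (hBC : dist B C = l) (hCA : dist C A = l) :
    IsGreatest ((fun p => dist p A * dist p B * dist p C) ''
        (convexHull ℝ {A, B, C})) (Real.sqrt 3 / 8 * l ^ 3) ∧
    (fun p => dist p A * dist p B * dist p C) (midpoint ℝ A B) = Real.sqrt 3 / 8 * l ^ 3 ∧
    (fun p => dist p A * dist p B * dist p C) (midpoint ℝ B C) = Real.sqrt 3 / 8 * l ^ 3 ∧
    (fun p => dist p A * dist p B * dist p C) (midpoint ℝ C A) = Real.sqrt 3 / 8 * l ^ 3 :=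
  stmt_17_general l A B C hAB hBC hCA
end
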